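/- arXiv:2303.07411 — 2 statements merged into one kernel-verified Lean document; each statement's English description precedes it below -/
import Mathlib

section
/- Let u, v, p : ℝ⁴ → ℝ be smooth functions satisfying p_t = J(u, p) and p_z = J(v, p) at every point. Then J(F2, p) = 0 at every point, where F2 := v_t − u_z − J(u, v). -/
noncomputable section

/-- Partial derivative in `t` of a function of `(t, x, y, z)`. -/
def pt (f : ℝ × ℝ × ℝ × ℝ → ℝ) (P : ℝ × ℝ × ℝ × ℝ) : ℝ :=
  deriv (fun w => f (w, P.2.1, P.2.2.1, P.2.2.2)) P.1

/-- Partial derivative in `x` of a function of `(t, x, y, z)`. -/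
def px (f : ℝ × ℝ × ℝ × ℝ → ℝ) (P : ℝ × ℝ × ℝ × ℝ) : ℝ :=
  deriv (fun w => f (P.1, w, P.2.2.1, P.2.2.2)) P.2.1

/-- Partial derivative in `y` of a function of `(t, x, y, z)`. -/
def py (f : ℝ × ℝ × ℝ × ℝ → ℝ) (P : ℝ × ℝ × ℝ × ℝ) : ℝ :=
  deriv (fun w => f (P.1, P.2.1, w, P.2.2.2)) P.2.2.1

/-- Partial derivative in `z` of a function of `(t, x, y, z)`. -/
def pz (f : ℝ × ℝ × ℝ × ℝ → ℝ) (P : ℝ × ℝ × ℝ × ℝ) : ℝ :=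
  deriv (fun w => f (P.1, P.2.1, P.2.2.1, w)) P.2.2.2

/-- Jacobi bracket `J(f, g) = f_x g_y - f_y g_x`. -/
def J (f g : ℝ × ℝ × ℝ × ℝ → ℝ) : ℝ × ℝ × ℝ × ℝ → ℝ :=
  fun P => px f P * py g P - py f P * px g P

/-- Planar Laplacian `Δf = f_xx + f_yy`. -/
def lap (f : ℝ × ℝ × ℝ × ℝ → ℝ) : ℝ × ℝ × ℝ × ℝ → ℝ :=
  fun P => px (px f) P + py (py f) P

/-- The operator `E(f) = x f_x + y f_y - 2 f`. -/
def Eop (f : ℝ × ℝ × ℝ × ℝ → ℝ) : ℝ × ℝ × ℝ × ℝ → ℝ :=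
  fun P => P.2.1 * px f P + P.2.2.1 * py f P - 2 * f P

/-- `F1 = (Δu)_t - (Δv)_z - J(u, Δu) + J(v, Δv)`. -/
def F1 (u v : ℝ × ℝ × ℝ × ℝ → ℝ) : ℝ × ℝ × ℝ × ℝ → ℝ :=
  fun P => pt (lap u) P - pz (lap v) P - J u (lap u) P + J v (lap v) P

/-- `F2 = v_t - u_z - J(u, v)`. -/
def F2 (u v : ℝ × ℝ × ℝ × ℝ → ℝ) : ℝ × ℝ × ℝ × ℝ → ℝ :=
  fun P => pt v P - pz u P - J u v P

section Aux

open scoped Topology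

abbrev E4 : Type := ℝ × ℝ × ℝ × ℝ

/-- Directional derivative. -/
def Dd (f : E4 → ℝ) (a : E4) : E4 → ℝ := fun P => fderiv ℝ f P a

lemma pt_eq {f : E4 → ℝ} {P : E4} (hf : DifferentiableAt ℝ f P) :
    pt f P = Dd f (1, 0, 0, 0) P := by
  obtain ⟨t, x, y, z⟩ := P
  have hc : HasDerivAt (fun w : ℝ => ((w, x, y, z) : E4)) (1, 0, 0, 0) t :=
    HasDerivAt.prodMk (hasDerivAt_id t) (HasDerivAt.prodMk (hasDerivAt_const t x)
      (HasDerivAt.prodMk (hasDerivAt_const t y) (hasDerivAt_const t z)))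
  exact (hf.hasFDerivAt.comp_hasDerivAt t hc).deriv

lemma px_eq {f : E4 → ℝ} {P : E4} (hf : DifferentiableAt ℝ f P) :
    px f P = Dd f (0, 1, 0, 0) P := by
  obtain ⟨t, x, y, z⟩ := P
  have hc : HasDerivAt (fun w : ℝ => ((t, w, y, z) : E4)) (0, 1, 0, 0) x :=
    HasDerivAt.prodMk (hasDerivAt_const x t) (HasDerivAt.prodMk (hasDerivAt_id x)
      (HasDerivAt.prodMk (hasDerivAt_const x y) (hasDerivAt_const x z)))
  exact (hf.hasFDerivAt.comp_hasDerivAt x hc).deriv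

lemma py_eq {f : E4 → ℝ} {P : E4} (hf : DifferentiableAt ℝ f P) :
    py f P = Dd f (0, 0, 1, 0) P := by
  obtain ⟨t, x, y, z⟩ := P
  have hc : HasDerivAt (fun w : ℝ => ((t, x, w, z) : E4)) (0, 0, 1, 0) y :=
    HasDerivAt.prodMk (hasDerivAt_const y t) (HasDerivAt.prodMk (hasDerivAt_const y x)
      (HasDerivAt.prodMk (hasDerivAt_id y) (hasDerivAt_const y z)))
  exact (hf.hasFDerivAt.comp_hasDerivAt y hc).deriv

lemma pz_eq {f : E4 → ℝ} {P : E4} (hf : DifferentiableAt ℝ f P) :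
    pz f P = Dd f (0, 0, 0, 1) P := by
  obtain ⟨t, x, y, z⟩ := P
  have hc : HasDerivAt (fun w : ℝ => ((t, x, y, w) : E4)) (0, 0, 0, 1) z :=
    HasDerivAt.prodMk (hasDerivAt_const z t) (HasDerivAt.prodMk (hasDerivAt_const z x)
      (HasDerivAt.prodMk (hasDerivAt_const z y) (hasDerivAt_id z)))
  exact (hf.hasFDerivAt.comp_hasDerivAt z hc).deriv

lemma contDiff_Dd {f : E4 → ℝ} (hf : ContDiff ℝ (⊤ : ℕ∞) f) (a : E4) :
    ContDiff ℝ (⊤ : ℕ∞) (Dd f a) :=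
  (hf.fderiv_right (by simp)).clm_apply contDiff_const

lemma Dd_sub {f g : E4 → ℝ} {P : E4} (hf : DifferentiableAt ℝ f P)
    (hg : DifferentiableAt ℝ g P) (a : E4) :
    Dd (fun Q => f Q - g Q) a P = Dd f a P - Dd g a P := by
  simp [Dd, fderiv_fun_sub hf hg]

lemma Dd_mul {f g : E4 → ℝ} {P : E4} (hf : DifferentiableAt ℝ f P)
    (hg : DifferentiableAt ℝ g P) (a : E4) :
    Dd (fun Q => f Q * g Q) a P = Dd f a P * g P + f P * Dd g a P := by
  simp [Dd, fderiv_fun_mul hf hg]; ring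

lemma Dd_Dd {f : E4 → ℝ} (hf : ContDiff ℝ (⊤ : ℕ∞) f) (a b P) :
    Dd (Dd f a) b P = Dd (Dd f b) a P := by
  have hdf : ContDiff ℝ (⊤ : ℕ∞) (fderiv ℝ f) := hf.fderiv_right (by simp)
  have h2 : HasFDerivAt (fderiv ℝ f) (fderiv ℝ (fderiv ℝ f) P) P :=
    ((hdf.differentiable (by simp)) P).hasFDerivAt
  have hsymm := second_derivative_symmetric
    (fun y => ((hf.differentiable (by simp)) y).hasFDerivAt) h2 a b
  have key : ∀ c d : E4, Dd (Dd f c) d P = fderiv ℝ (fderiv ℝ f) P d c := by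
    intro c d
    have : Dd (Dd f c) d P = fderiv ℝ (fun Q => (fderiv ℝ f Q) c) P d := rfl
    rw [this, fderiv_clm_apply ((hdf.differentiable (by simp)) P)
      (differentiableAt_const c)]
    simp
  rw [key a b, key b a, hsymm]

end Aux
theorem rmhd_p_covering_compatibility
    (u v p : ℝ × ℝ × ℝ × ℝ → ℝ)
    (hu : ContDiff ℝ (⊤ : ℕ∞) u) (hv : ContDiff ℝ (⊤ : ℕ∞) v) (hp : ContDiff ℝ (⊤ : ℕ∞) p)
    (hpt : ∀ P, pt p P = J u p P)
    (hpz : ∀ P, pz p P = J v p P) :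
    ∀ P, J (F2 u v) p P = 0 := by
  have hud : Differentiable ℝ u := hu.differentiable (by simp)
  have hvd : Differentiable ℝ v := hv.differentiable (by simp)
  have hpd : Differentiable ℝ p := hp.differentiable (by simp)
  have dDu : ∀ a Q, DifferentiableAt ℝ (Dd u a) Q :=
    fun a Q => ((contDiff_Dd hu a).differentiable (by simp)) Q
  have dDv : ∀ a Q, DifferentiableAt ℝ (Dd v a) Q :=
    fun a Q => ((contDiff_Dd hv a).differentiable (by simp)) Q
  have dDp : ∀ a Q, DifferentiableAt ℝ (Dd p a) Q :=
    fun a Q => ((contDiff_Dd hp a).differentiable (by simp)) Q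
  -- function-level form of the two covering equations
  have hU : Dd p (1,0,0,0) =
      fun Q => Dd u (0,1,0,0) Q * Dd p (0,0,1,0) Q - Dd u (0,0,1,0) Q * Dd p (0,1,0,0) Q := by
    funext Q
    rw [← pt_eq (hpd Q), hpt Q]
    simp only [J]
    rw [px_eq (hud Q), py_eq (hpd Q), py_eq (hud Q), px_eq (hpd Q)]
  have hV : Dd p (0,0,0,1) =
      fun Q => Dd v (0,1,0,0) Q * Dd p (0,0,1,0) Q - Dd v (0,0,1,0) Q * Dd p (0,1,0,0) Q := by
    funext Q
    rw [← pz_eq (hpd Q), hpz Q]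
    simp only [J]
    rw [px_eq (hvd Q), py_eq (hpd Q), py_eq (hvd Q), px_eq (hpd Q)]
  -- differentiated covering equations
  have keyU : ∀ a Q, Dd (Dd p (1,0,0,0)) a Q =
      (Dd (Dd u (0,1,0,0)) a Q * Dd p (0,0,1,0) Q + Dd u (0,1,0,0) Q * Dd (Dd p (0,0,1,0)) a Q)
      - (Dd (Dd u (0,0,1,0)) a Q * Dd p (0,1,0,0) Q + Dd u (0,0,1,0) Q * Dd (Dd p (0,1,0,0)) a Q) := by
    intro a Q
    rw [hU, Dd_sub ((dDu (0,1,0,0) Q).fun_mul (dDp (0,0,1,0) Q)) ((dDu (0,0,1,0) Q).fun_mul (dDp (0,1,0,0) Q)) a,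
      Dd_mul (dDu (0,1,0,0) Q) (dDp (0,0,1,0) Q) a, Dd_mul (dDu (0,0,1,0) Q) (dDp (0,1,0,0) Q) a]
  have keyV : ∀ a Q, Dd (Dd p (0,0,0,1)) a Q =
      (Dd (Dd v (0,1,0,0)) a Q * Dd p (0,0,1,0) Q + Dd v (0,1,0,0) Q * Dd (Dd p (0,0,1,0)) a Q)
      - (Dd (Dd v (0,0,1,0)) a Q * Dd p (0,1,0,0) Q + Dd v (0,0,1,0) Q * Dd (Dd p (0,1,0,0)) a Q) := by
    intro a Q
    rw [hV, Dd_sub ((dDv (0,1,0,0) Q).fun_mul (dDp (0,0,1,0) Q)) ((dDv (0,0,1,0) Q).fun_mul (dDp (0,1,0,0) Q)) a,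
      Dd_mul (dDv (0,1,0,0) Q) (dDp (0,0,1,0) Q) a, Dd_mul (dDv (0,0,1,0) Q) (dDp (0,1,0,0) Q) a]
  -- F2 in terms of directional derivatives
  have hF2fun : F2 u v = fun Q => Dd v (1,0,0,0) Q - Dd u (0,0,0,1) Q -
      (Dd u (0,1,0,0) Q * Dd v (0,0,1,0) Q - Dd u (0,0,1,0) Q * Dd v (0,1,0,0) Q) := by
    funext Q
    simp only [F2, J]
    rw [pt_eq (hvd Q), pz_eq (hud Q), px_eq (hud Q), py_eq (hvd Q), py_eq (hud Q), px_eq (hvd Q)]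
  have hF2c : ContDiff ℝ (⊤ : ℕ∞) (F2 u v) := by
    rw [hF2fun]
    exact ((contDiff_Dd hv (1,0,0,0)).sub (contDiff_Dd hu (0,0,0,1))).sub
      (((contDiff_Dd hu (0,1,0,0)).mul (contDiff_Dd hv (0,0,1,0))).sub
        ((contDiff_Dd hu (0,0,1,0)).mul (contDiff_Dd hv (0,1,0,0))))
  have hF2d : Differentiable ℝ (F2 u v) := hF2c.differentiable (by simp)
  have expandF2 : ∀ a Q, Dd (F2 u v) a Q =
      (Dd (Dd v (1,0,0,0)) a Q - Dd (Dd u (0,0,0,1)) a Q) -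
      ((Dd (Dd u (0,1,0,0)) a Q * Dd v (0,0,1,0) Q + Dd u (0,1,0,0) Q * Dd (Dd v (0,0,1,0)) a Q)
       - (Dd (Dd u (0,0,1,0)) a Q * Dd v (0,1,0,0) Q + Dd u (0,0,1,0) Q * Dd (Dd v (0,1,0,0)) a Q)) := by
    intro a Q
    rw [hF2fun,
      Dd_sub ((dDv (1,0,0,0) Q).fun_sub (dDu (0,0,0,1) Q))
        (((dDu (0,1,0,0) Q).fun_mul (dDv (0,0,1,0) Q)).fun_sub ((dDu (0,0,1,0) Q).fun_mul (dDv (0,1,0,0) Q))) a,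
      Dd_sub (dDv (1,0,0,0) Q) (dDu (0,0,0,1) Q) a,
      Dd_sub ((dDu (0,1,0,0) Q).fun_mul (dDv (0,0,1,0) Q)) ((dDu (0,0,1,0) Q).fun_mul (dDv (0,1,0,0) Q)) a,
      Dd_mul (dDu (0,1,0,0) Q) (dDv (0,0,1,0) Q) a, Dd_mul (dDu (0,0,1,0) Q) (dDv (0,1,0,0) Q) a]
  intro P
  have h1 := keyU (0,1,0,0) P
  have h2 := keyU (0,0,1,0) P
  have h5 := keyU (0,0,0,1) P
  have h3 := keyV (0,1,0,0) P
  have h4 := keyV (0,0,1,0) P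
  have h6 := keyV (1,0,0,0) P
  have hsym := Dd_Dd hp (1,0,0,0) (0,0,0,1) P
  rw [Dd_Dd hu (0,1,0,0) (0,0,1,0) P, Dd_Dd hp (0,1,0,0) (0,0,1,0) P] at h2
  rw [Dd_Dd hv (0,1,0,0) (0,0,1,0) P, Dd_Dd hp (0,1,0,0) (0,0,1,0) P] at h4
  rw [Dd_Dd hu (0,1,0,0) (0,0,0,1) P, Dd_Dd hu (0,0,1,0) (0,0,0,1) P,
      Dd_Dd hp (0,1,0,0) (0,0,0,1) P, Dd_Dd hp (0,0,1,0) (0,0,0,1) P] at h5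
  rw [Dd_Dd hv (0,1,0,0) (1,0,0,0) P, Dd_Dd hv (0,0,1,0) (1,0,0,0) P,
      Dd_Dd hp (0,1,0,0) (1,0,0,0) P, Dd_Dd hp (0,0,1,0) (1,0,0,0) P] at h6
  show px (F2 u v) P * py p P - py (F2 u v) P * px p P = 0
  rw [px_eq (hF2d P), py_eq (hF2d P), px_eq (hpd P), py_eq (hpd P),
      expandF2 (0,1,0,0) P, expandF2 (0,0,1,0) P,
      Dd_Dd hu (0,1,0,0) (0,0,1,0) P, Dd_Dd hv (0,1,0,0) (0,0,1,0) P]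
  linear_combination h5 - h6 - hsym - Dd v (0,1,0,0) P * h2 + Dd v (0,0,1,0) P * h1
    + Dd u (0,1,0,0) P * h4 - Dd u (0,0,1,0) P * h3
end
end

section
/- Let u, v : ℝ⁴ → ℝ be a smooth solution of RMHD. Then the pair φ₁ := 2u − x·u_x − y·u_y (= −E(u)), φ₂ := 2v − x·v_x − y·v_y (= −E(v)) satisfies the linearized (tangent) system of RMHD: (Δφ₁)_t − (Δφ₂)_z − J(φ₁, Δu) − J(u, Δφ₁) + J(φ₂, Δv) + J(v, Δφ₂) = 0 and φ₂,t − φ₁,z − J(φ₁, v) − J(u, φ₂) = 0 at every point. That is, the scaling generator Φ₀ is a symmetry of RMHD. -/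
noncomputable section

section RMHDAux

local notation "V" => (ℝ × ℝ × ℝ × ℝ)

variable {f g : V → ℝ}

lemma lineT_hasDerivAt (P : V) (w : ℝ) :
    HasDerivAt (fun w : ℝ => ((w, P.2.1, P.2.2.1, P.2.2.2) : V))
      ((1:ℝ), (0:ℝ), (0:ℝ), (0:ℝ)) w :=
  HasDerivAt.prodMk (hasDerivAt_id w) (hasDerivAt_const _ _)

lemma lineX_hasDerivAt (P : V) (w : ℝ) :
    HasDerivAt (fun w : ℝ => ((P.1, w, P.2.2.1, P.2.2.2) : V))
      ((0:ℝ), (1:ℝ), (0:ℝ), (0:ℝ)) w :=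
  HasDerivAt.prodMk (hasDerivAt_const _ _) (HasDerivAt.prodMk (hasDerivAt_id w) (hasDerivAt_const _ _))

lemma lineY_hasDerivAt (P : V) (w : ℝ) :
    HasDerivAt (fun w : ℝ => ((P.1, P.2.1, w, P.2.2.2) : V))
      ((0:ℝ), (0:ℝ), (1:ℝ), (0:ℝ)) w :=
  HasDerivAt.prodMk (hasDerivAt_const _ _) (HasDerivAt.prodMk (hasDerivAt_const _ _)
    (HasDerivAt.prodMk (hasDerivAt_id w) (hasDerivAt_const _ _)))

lemma lineZ_hasDerivAt (P : V) (w : ℝ) :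
    HasDerivAt (fun w : ℝ => ((P.1, P.2.1, P.2.2.1, w) : V))
      ((0:ℝ), (0:ℝ), (0:ℝ), (1:ℝ)) w :=
  HasDerivAt.prodMk (hasDerivAt_const _ _) (HasDerivAt.prodMk (hasDerivAt_const _ _)
    (HasDerivAt.prodMk (hasDerivAt_const _ _) (hasDerivAt_id w)))

lemma snd_rep (hf : ContDiff ℝ (⊤ : ℕ∞) f) (P : V) (a b : V) :
    fderiv ℝ (fun Q => fderiv ℝ f Q b) P a = fderiv ℝ (fderiv ℝ f) P a b := by
  have hdf : DifferentiableAt ℝ (fderiv ℝ f) P :=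
    ((hf.fderiv_right (m := 1) (by exact WithTop.coe_le_coe.mpr (le_top : (((1 + 1 : ℕ) : ℕ∞)) ≤ ⊤))).differentiable one_ne_zero) P
  rw [fderiv_clm_apply hdf (differentiableAt_const b)]
  simp

lemma snd_symm (hf : ContDiff ℝ (⊤ : ℕ∞) f) (P : V) (a b : V) :
    fderiv ℝ (fderiv ℝ f) P a b = fderiv ℝ (fderiv ℝ f) P b a := by
  have hdf : Differentiable ℝ (fderiv ℝ f) :=
    (hf.fderiv_right (m := 1) (by exact WithTop.coe_le_coe.mpr (le_top : (((1 + 1 : ℕ) : ℕ∞)) ≤ ⊤))).differentiable one_ne_zero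
  exact second_derivative_symmetric
    (fun y => ((hf.differentiable (by simp)) y).hasFDerivAt)
    (hdf P).hasFDerivAt a b

lemma pt_eq_fderiv (hf : Differentiable ℝ f) (P : V) :
    pt f P = fderiv ℝ f P ((1:ℝ), (0:ℝ), (0:ℝ), (0:ℝ)) :=
  (((hf _).hasFDerivAt.comp_hasDerivAt P.1 (lineT_hasDerivAt P P.1))).deriv

lemma diffT (hf : ContDiff ℝ (⊤ : ℕ∞) f) (P : V) (w : ℝ) :
    DifferentiableAt ℝ (fun w : ℝ => f (w, P.2.1, P.2.2.1, P.2.2.2)) w :=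
  (((hf.differentiable (by simp)) _).hasFDerivAt.comp_hasDerivAt w
    (lineT_hasDerivAt P w)).differentiableAt

@[fun_prop]
lemma contDiff_pt (hf : ContDiff ℝ (⊤ : ℕ∞) f) : ContDiff ℝ (⊤ : ℕ∞) (pt f) := by
  have h : pt f = fun P => fderiv ℝ f P ((1:ℝ), (0:ℝ), (0:ℝ), (0:ℝ)) :=
    funext (pt_eq_fderiv (hf.differentiable (by simp)))
  rw [h]
  exact (hf.fderiv_right (by simp)).clm_apply contDiff_const

lemma pt_add (hf : ContDiff ℝ (⊤ : ℕ∞) f) (hg : ContDiff ℝ (⊤ : ℕ∞) g) :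
    pt (fun Q => f Q + g Q) = fun P => pt f P + pt g P := by
  funext P
  simp only [pt]
  exact deriv_add (diffT hf P _) (diffT hg P _)

lemma pt_sub (hf : ContDiff ℝ (⊤ : ℕ∞) f) (hg : ContDiff ℝ (⊤ : ℕ∞) g) :
    pt (fun Q => f Q - g Q) = fun P => pt f P - pt g P := by
  funext P
  simp only [pt]
  exact deriv_sub (diffT hf P _) (diffT hg P _)

lemma pt_mul (hf : ContDiff ℝ (⊤ : ℕ∞) f) (hg : ContDiff ℝ (⊤ : ℕ∞) g) :
    pt (fun Q => f Q * g Q) = fun P => pt f P * g P + f P * pt g P := by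
  funext P
  simp only [pt]
  exact deriv_mul (diffT hf P _) (diffT hg P _)

lemma pt_const (c : ℝ) : pt (fun _ => c) = fun _ => (0:ℝ) := by
  funext P
  simp [pt]

lemma pt_coordx : pt (fun Q : V => Q.2.1) = fun _ => (0:ℝ) := by
  funext P
  simp [pt]

lemma pt_coordy : pt (fun Q : V => Q.2.2.1) = fun _ => (0:ℝ) := by
  funext P
  simp [pt]


lemma px_eq_fderiv (hf : Differentiable ℝ f) (P : V) :
    px f P = fderiv ℝ f P ((0:ℝ), (1:ℝ), (0:ℝ), (0:ℝ)) :=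
  (((hf _).hasFDerivAt.comp_hasDerivAt P.2.1 (lineX_hasDerivAt P P.2.1))).deriv

lemma diffX (hf : ContDiff ℝ (⊤ : ℕ∞) f) (P : V) (w : ℝ) :
    DifferentiableAt ℝ (fun w : ℝ => f (P.1, w, P.2.2.1, P.2.2.2)) w :=
  (((hf.differentiable (by simp)) _).hasFDerivAt.comp_hasDerivAt w
    (lineX_hasDerivAt P w)).differentiableAt

@[fun_prop]
lemma contDiff_px (hf : ContDiff ℝ (⊤ : ℕ∞) f) : ContDiff ℝ (⊤ : ℕ∞) (px f) := by
  have h : px f = fun P => fderiv ℝ f P ((0:ℝ), (1:ℝ), (0:ℝ), (0:ℝ)) :=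
    funext (px_eq_fderiv (hf.differentiable (by simp)))
  rw [h]
  exact (hf.fderiv_right (by simp)).clm_apply contDiff_const

lemma px_add (hf : ContDiff ℝ (⊤ : ℕ∞) f) (hg : ContDiff ℝ (⊤ : ℕ∞) g) :
    px (fun Q => f Q + g Q) = fun P => px f P + px g P := by
  funext P
  simp only [px]
  exact deriv_add (diffX hf P _) (diffX hg P _)

lemma px_sub (hf : ContDiff ℝ (⊤ : ℕ∞) f) (hg : ContDiff ℝ (⊤ : ℕ∞) g) :
    px (fun Q => f Q - g Q) = fun P => px f P - px g P := by
  funext P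
  simp only [px]
  exact deriv_sub (diffX hf P _) (diffX hg P _)

lemma px_mul (hf : ContDiff ℝ (⊤ : ℕ∞) f) (hg : ContDiff ℝ (⊤ : ℕ∞) g) :
    px (fun Q => f Q * g Q) = fun P => px f P * g P + f P * px g P := by
  funext P
  simp only [px]
  exact deriv_mul (diffX hf P _) (diffX hg P _)

lemma px_const (c : ℝ) : px (fun _ => c) = fun _ => (0:ℝ) := by
  funext P
  simp [px]

lemma px_coordx : px (fun Q : V => Q.2.1) = fun _ => (1:ℝ) := by
  funext P
  simp [px]

lemma px_coordy : px (fun Q : V => Q.2.2.1) = fun _ => (0:ℝ) := by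
  funext P
  simp [px]


lemma py_eq_fderiv (hf : Differentiable ℝ f) (P : V) :
    py f P = fderiv ℝ f P ((0:ℝ), (0:ℝ), (1:ℝ), (0:ℝ)) :=
  (((hf _).hasFDerivAt.comp_hasDerivAt P.2.2.1 (lineY_hasDerivAt P P.2.2.1))).deriv

lemma diffY (hf : ContDiff ℝ (⊤ : ℕ∞) f) (P : V) (w : ℝ) :
    DifferentiableAt ℝ (fun w : ℝ => f (P.1, P.2.1, w, P.2.2.2)) w :=
  (((hf.differentiable (by simp)) _).hasFDerivAt.comp_hasDerivAt w
    (lineY_hasDerivAt P w)).differentiableAt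

@[fun_prop]
lemma contDiff_py (hf : ContDiff ℝ (⊤ : ℕ∞) f) : ContDiff ℝ (⊤ : ℕ∞) (py f) := by
  have h : py f = fun P => fderiv ℝ f P ((0:ℝ), (0:ℝ), (1:ℝ), (0:ℝ)) :=
    funext (py_eq_fderiv (hf.differentiable (by simp)))
  rw [h]
  exact (hf.fderiv_right (by simp)).clm_apply contDiff_const

lemma py_add (hf : ContDiff ℝ (⊤ : ℕ∞) f) (hg : ContDiff ℝ (⊤ : ℕ∞) g) :
    py (fun Q => f Q + g Q) = fun P => py f P + py g P := by
  funext P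
  simp only [py]
  exact deriv_add (diffY hf P _) (diffY hg P _)

lemma py_sub (hf : ContDiff ℝ (⊤ : ℕ∞) f) (hg : ContDiff ℝ (⊤ : ℕ∞) g) :
    py (fun Q => f Q - g Q) = fun P => py f P - py g P := by
  funext P
  simp only [py]
  exact deriv_sub (diffY hf P _) (diffY hg P _)

lemma py_mul (hf : ContDiff ℝ (⊤ : ℕ∞) f) (hg : ContDiff ℝ (⊤ : ℕ∞) g) :
    py (fun Q => f Q * g Q) = fun P => py f P * g P + f P * py g P := by
  funext P
  simp only [py]
  exact deriv_mul (diffY hf P _) (diffY hg P _)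

lemma py_const (c : ℝ) : py (fun _ => c) = fun _ => (0:ℝ) := by
  funext P
  simp [py]

lemma py_coordx : py (fun Q : V => Q.2.1) = fun _ => (0:ℝ) := by
  funext P
  simp [py]

lemma py_coordy : py (fun Q : V => Q.2.2.1) = fun _ => (1:ℝ) := by
  funext P
  simp [py]


lemma pz_eq_fderiv (hf : Differentiable ℝ f) (P : V) :
    pz f P = fderiv ℝ f P ((0:ℝ), (0:ℝ), (0:ℝ), (1:ℝ)) :=
  (((hf _).hasFDerivAt.comp_hasDerivAt P.2.2.2 (lineZ_hasDerivAt P P.2.2.2))).deriv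

lemma diffZ (hf : ContDiff ℝ (⊤ : ℕ∞) f) (P : V) (w : ℝ) :
    DifferentiableAt ℝ (fun w : ℝ => f (P.1, P.2.1, P.2.2.1, w)) w :=
  (((hf.differentiable (by simp)) _).hasFDerivAt.comp_hasDerivAt w
    (lineZ_hasDerivAt P w)).differentiableAt

@[fun_prop]
lemma contDiff_pz (hf : ContDiff ℝ (⊤ : ℕ∞) f) : ContDiff ℝ (⊤ : ℕ∞) (pz f) := by
  have h : pz f = fun P => fderiv ℝ f P ((0:ℝ), (0:ℝ), (0:ℝ), (1:ℝ)) :=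
    funext (pz_eq_fderiv (hf.differentiable (by simp)))
  rw [h]
  exact (hf.fderiv_right (by simp)).clm_apply contDiff_const

lemma pz_add (hf : ContDiff ℝ (⊤ : ℕ∞) f) (hg : ContDiff ℝ (⊤ : ℕ∞) g) :
    pz (fun Q => f Q + g Q) = fun P => pz f P + pz g P := by
  funext P
  simp only [pz]
  exact deriv_add (diffZ hf P _) (diffZ hg P _)

lemma pz_sub (hf : ContDiff ℝ (⊤ : ℕ∞) f) (hg : ContDiff ℝ (⊤ : ℕ∞) g) :
    pz (fun Q => f Q - g Q) = fun P => pz f P - pz g P := by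
  funext P
  simp only [pz]
  exact deriv_sub (diffZ hf P _) (diffZ hg P _)

lemma pz_mul (hf : ContDiff ℝ (⊤ : ℕ∞) f) (hg : ContDiff ℝ (⊤ : ℕ∞) g) :
    pz (fun Q => f Q * g Q) = fun P => pz f P * g P + f P * pz g P := by
  funext P
  simp only [pz]
  exact deriv_mul (diffZ hf P _) (diffZ hg P _)

lemma pz_const (c : ℝ) : pz (fun _ => c) = fun _ => (0:ℝ) := by
  funext P
  simp [pz]

lemma pz_coordx : pz (fun Q : V => Q.2.1) = fun _ => (0:ℝ) := by
  funext P
  simp [pz]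

lemma pz_coordy : pz (fun Q : V => Q.2.2.1) = fun _ => (0:ℝ) := by
  funext P
  simp [pz]


lemma px_pt_comm (hf : ContDiff ℝ (⊤ : ℕ∞) f) : px (pt f) = pt (px f) := by
  funext P
  have hpt0 : pt f = fun Q => fderiv ℝ f Q ((1:ℝ), (0:ℝ), (0:ℝ), (0:ℝ)) :=
    funext (pt_eq_fderiv (hf.differentiable (by simp)))
  have hpx0 : px f = fun Q => fderiv ℝ f Q ((0:ℝ), (1:ℝ), (0:ℝ), (0:ℝ)) :=
    funext (px_eq_fderiv (hf.differentiable (by simp)))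
  rw [px_eq_fderiv ((contDiff_pt hf).differentiable (by simp)),
      pt_eq_fderiv ((contDiff_px hf).differentiable (by simp)), hpx0, hpt0,
      snd_rep hf, snd_rep hf, snd_symm hf]


lemma py_pt_comm (hf : ContDiff ℝ (⊤ : ℕ∞) f) : py (pt f) = pt (py f) := by
  funext P
  have hpt0 : pt f = fun Q => fderiv ℝ f Q ((1:ℝ), (0:ℝ), (0:ℝ), (0:ℝ)) :=
    funext (pt_eq_fderiv (hf.differentiable (by simp)))
  have hpy0 : py f = fun Q => fderiv ℝ f Q ((0:ℝ), (0:ℝ), (1:ℝ), (0:ℝ)) :=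
    funext (py_eq_fderiv (hf.differentiable (by simp)))
  rw [py_eq_fderiv ((contDiff_pt hf).differentiable (by simp)),
      pt_eq_fderiv ((contDiff_py hf).differentiable (by simp)), hpy0, hpt0,
      snd_rep hf, snd_rep hf, snd_symm hf]


lemma pz_pt_comm (hf : ContDiff ℝ (⊤ : ℕ∞) f) : pz (pt f) = pt (pz f) := by
  funext P
  have hpt0 : pt f = fun Q => fderiv ℝ f Q ((1:ℝ), (0:ℝ), (0:ℝ), (0:ℝ)) :=
    funext (pt_eq_fderiv (hf.differentiable (by simp)))
  have hpz0 : pz f = fun Q => fderiv ℝ f Q ((0:ℝ), (0:ℝ), (0:ℝ), (1:ℝ)) :=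
    funext (pz_eq_fderiv (hf.differentiable (by simp)))
  rw [pz_eq_fderiv ((contDiff_pt hf).differentiable (by simp)),
      pt_eq_fderiv ((contDiff_pz hf).differentiable (by simp)), hpz0, hpt0,
      snd_rep hf, snd_rep hf, snd_symm hf]


lemma py_px_comm (hf : ContDiff ℝ (⊤ : ℕ∞) f) : py (px f) = px (py f) := by
  funext P
  have hpx0 : px f = fun Q => fderiv ℝ f Q ((0:ℝ), (1:ℝ), (0:ℝ), (0:ℝ)) :=
    funext (px_eq_fderiv (hf.differentiable (by simp)))
  have hpy0 : py f = fun Q => fderiv ℝ f Q ((0:ℝ), (0:ℝ), (1:ℝ), (0:ℝ)) :=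
    funext (py_eq_fderiv (hf.differentiable (by simp)))
  rw [py_eq_fderiv ((contDiff_px hf).differentiable (by simp)),
      px_eq_fderiv ((contDiff_py hf).differentiable (by simp)), hpy0, hpx0,
      snd_rep hf, snd_rep hf, snd_symm hf]


lemma pz_px_comm (hf : ContDiff ℝ (⊤ : ℕ∞) f) : pz (px f) = px (pz f) := by
  funext P
  have hpx0 : px f = fun Q => fderiv ℝ f Q ((0:ℝ), (1:ℝ), (0:ℝ), (0:ℝ)) :=
    funext (px_eq_fderiv (hf.differentiable (by simp)))
  have hpz0 : pz f = fun Q => fderiv ℝ f Q ((0:ℝ), (0:ℝ), (0:ℝ), (1:ℝ)) :=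
    funext (pz_eq_fderiv (hf.differentiable (by simp)))
  rw [pz_eq_fderiv ((contDiff_px hf).differentiable (by simp)),
      px_eq_fderiv ((contDiff_pz hf).differentiable (by simp)), hpz0, hpx0,
      snd_rep hf, snd_rep hf, snd_symm hf]


lemma pz_py_comm (hf : ContDiff ℝ (⊤ : ℕ∞) f) : pz (py f) = py (pz f) := by
  funext P
  have hpy0 : py f = fun Q => fderiv ℝ f Q ((0:ℝ), (0:ℝ), (1:ℝ), (0:ℝ)) :=
    funext (py_eq_fderiv (hf.differentiable (by simp)))
  have hpz0 : pz f = fun Q => fderiv ℝ f Q ((0:ℝ), (0:ℝ), (0:ℝ), (1:ℝ)) :=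
    funext (pz_eq_fderiv (hf.differentiable (by simp)))
  rw [pz_eq_fderiv ((contDiff_py hf).differentiable (by simp)),
      py_eq_fderiv ((contDiff_pz hf).differentiable (by simp)), hpz0, hpy0,
      snd_rep hf, snd_rep hf, snd_symm hf]


end RMHDAux

lemma lap_def (f : ℝ × ℝ × ℝ × ℝ → ℝ) : lap f = fun P => px (px f) P + py (py f) P := rfl
lemma J_def (f g : ℝ × ℝ × ℝ × ℝ → ℝ) : J f g = fun P => px f P * py g P - py f P * px g P := rfl
lemma F1_def (u v : ℝ × ℝ × ℝ × ℝ → ℝ) : F1 u v = fun P => pt (lap u) P - pz (lap v) P - J u (lap u) P + J v (lap v) P := rfl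
lemma F2_def (u v : ℝ × ℝ × ℝ × ℝ → ℝ) : F2 u v = fun P => pt v P - pz u P - J u v P := rfl

set_option maxHeartbeats 4000000 in
theorem scaling_symmetry_of_rmhd
    (u v : ℝ × ℝ × ℝ × ℝ → ℝ)
    (hu : ContDiff ℝ (⊤ : ℕ∞) u) (hv : ContDiff ℝ (⊤ : ℕ∞) v)
    (hF1 : ∀ P, F1 u v P = 0) (hF2 : ∀ P, F2 u v P = 0)
    (f1 f2 : ℝ × ℝ × ℝ × ℝ → ℝ)
    (hf1 : f1 = fun P => 2 * u P - P.2.1 * px u P - P.2.2.1 * py u P)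
    (hf2 : f2 = fun P => 2 * v P - P.2.1 * px v P - P.2.2.1 * py v P) :
    (∀ P, pt (lap f1) P - pz (lap f2) P - J f1 (lap u) P - J u (lap f1) P
      + J f2 (lap v) P + J v (lap f2) P = 0) ∧
    (∀ P, pt f2 P - pz f1 P - J f1 v P - J u f2 P = 0) := by
  subst hf1 hf2
  have h1 : F1 u v = fun _ => (0:ℝ) := funext hF1
  have h2 : F2 u v = fun _ => (0:ℝ) := funext hF2
  constructor
  · intro P
    have hx : px (F1 u v) P = 0 := by rw [h1, px_const]
    have hy : py (F1 u v) P = 0 := by rw [h1, py_const]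
    simp only [F1_def, J_def, lap_def] at hx hy ⊢
    simp (disch := fun_prop) only
      [pt_add, pt_sub, pt_mul, pt_const, pt_coordx, pt_coordy,
       px_add, px_sub, px_mul, px_const, px_coordx, px_coordy,
       py_add, py_sub, py_mul, py_const, py_coordx, py_coordy,
       pz_add, pz_sub, pz_mul, pz_const, pz_coordx, pz_coordy,
       px_pt_comm, py_pt_comm, pz_pt_comm, py_px_comm, pz_px_comm, pz_py_comm]
      at hx hy ⊢
    linear_combination (-P.2.1) * hx + (-P.2.2.1) * hy
  · intro P
    have h0 : F2 u v P = 0 := hF2 P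
    have hx : px (F2 u v) P = 0 := by rw [h2, px_const]
    have hy : py (F2 u v) P = 0 := by rw [h2, py_const]
    simp only [F2_def, J_def, lap_def] at h0 hx hy ⊢
    simp (disch := fun_prop) only
      [pt_add, pt_sub, pt_mul, pt_const, pt_coordx, pt_coordy,
       px_add, px_sub, px_mul, px_const, px_coordx, px_coordy,
       py_add, py_sub, py_mul, py_const, py_coordx, py_coordy,
       pz_add, pz_sub, pz_mul, pz_const, pz_coordx, pz_coordy,
       px_pt_comm, py_pt_comm, pz_pt_comm, py_px_comm, pz_px_comm, pz_py_comm]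
      at h0 hx hy ⊢
    linear_combination 2 * h0 + (-P.2.1) * hx + (-P.2.2.1) * hy
end
end
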